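/- arXiv:1603.07922 — 4 statements merged into one kernel-verified Lean document; each statement's English description precedes it below -/
import Mathlib

section
/- The only solutions in integers x and positive integers m, n to the equation x² + 23^m = 12^n are (x, m, n) = (±11, 1, 2), and the only solutions in integers x and positive integers m, n to the equation x² + 47^m = 24^n are (x, m, n) = (±23, 1, 2). -/
/-!
Write `y = |x|`; both equations have the shape `y ^ 2 + c ^ m = d ^ n` with `c` prime,
`c + 1 = 2 * d` and `4 ∣ d`. Modulo 4, `m` must be odd.

If `n = 2 * k`, then `(d ^ k - y) * (d ^ k + y) = c ^ m` with `c ∤ 2 * d ^ k` forces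
`d ^ k - y = 1`, i.e. `c ^ m + 1 = 2 * d ^ k`. For `k = 1` this is the solution; for `k ≥ 2` it
fails modulo a power of two `v ∣ 2 * d ^ 2` (16, resp. 32) with `c ^ 2 ≡ 1` but `c + 1 ≢ 0`.

If `n` is odd there is no solution, by a sieve on the exponents: for an odd prime `p` with
`c ^ L ≡ d ^ L ≡ 1 [MOD p]`, the square `d ^ n - c ^ m = y ^ 2` modulo `p` depends only on
`(m % L, n % L)`, so Euler's criterion excludes some of these pairs. Lifting the survivors from
`(1, 1)` modulo 2 through moduli dividing 4320 (resp. 360), none is left.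
-/
lemma not_isSquare_of_pow_div_two_eq_neg_one {p : ℕ} [hp : Fact p.Prime] (hp2 : p ≠ 2)
    {a : ZMod p} (ha : a ^ (p / 2) = -1) : ¬ IsSquare a := by
  have : Fact (2 < p) := ⟨hp.out.two_le.lt_of_ne' hp2⟩
  intro hsq
  have ha0 : a ≠ 0 := by
    rintro rfl
    rw [zero_pow (Nat.div_pos hp.out.two_le two_pos).ne', eq_comm, neg_eq_zero] at ha
    exact one_ne_zero ha
  exact ZMod.neg_one_ne_one (ha.symm.trans ((ZMod.euler_criterion p ha0).1 hsq))

-- The `+ p` keeps the subtraction from truncating: this is the residue of `d ^ b - c ^ a`.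
def ExcludedBy (c d L p : ℕ) (ab : ℕ × ℕ) : Prop :=
  c ^ L % p = 1 ∧ d ^ L % p = 1 ∧
    ((d ^ ab.2 % p + p - c ^ ab.1 % p) % p) ^ (p / 2) % p = p - 1

instance (c d L p : ℕ) (ab : ℕ × ℕ) : Decidable (ExcludedBy c d L p ab) := by
  unfold ExcludedBy; infer_instance

theorem not_excludedBy {c d y m n L p : ℕ} (h : y ^ 2 + c ^ m = d ^ n) (hp : p.Prime)
    (hp2 : p ≠ 2) : ¬ ExcludedBy c d L p (m % L, n % L) := by
  have : Fact p.Prime := ⟨hp⟩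
  rintro ⟨hc, hd, hr⟩
  have cast_eq_one {a : ℕ} (ha : a % p = 1) : (a : ZMod p) = 1 := by
    rw [← ZMod.natCast_mod, ha, Nat.cast_one]
  set r := (d ^ (n % L) % p + p - c ^ (m % L) % p) % p
  have hr_sq : (r : ZMod p) = (y : ZMod p) ^ 2 := by
    have hcL : (c : ZMod p) ^ L = 1 := by exact_mod_cast cast_eq_one hc
    have hdL : (d : ZMod p) ^ L = 1 := by exact_mod_cast cast_eq_one hd
    have hcast : (y : ZMod p) ^ 2 + (c : ZMod p) ^ m = (d : ZMod p) ^ n := by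
      exact_mod_cast congrArg (Nat.cast : ℕ → ZMod p) h
    rw [ZMod.natCast_mod, Nat.cast_sub ((Nat.mod_lt _ hp.pos).le.trans (Nat.le_add_left _ _)),
      Nat.cast_add, ZMod.natCast_self, add_zero, ZMod.natCast_mod, ZMod.natCast_mod,
      Nat.cast_pow, Nat.cast_pow, ← pow_eq_pow_mod m hcL, ← pow_eq_pow_mod n hdL, ← hcast,
      add_sub_cancel_right]
  have hr_pow : (r : ZMod p) ^ (p / 2) = -1 := by
    have := congrArg (Nat.cast : ℕ → ZMod p) hr
    rwa [ZMod.natCast_mod, Nat.cast_sub hp.one_le, ZMod.natCast_self, Nat.cast_one, zero_sub,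
      Nat.cast_pow] at this
  exact not_isSquare_of_pow_div_two_eq_neg_one hp2 hr_pow (hr_sq ▸ IsSquare.sq _)

def liftResidues (L k : ℕ) (S : List (ℕ × ℕ)) : List (ℕ × ℕ) :=
  S.flatMap fun ab =>
    (List.range k ×ˢ List.range k).map fun ij => (ab.1 + ij.1 * L, ab.2 + ij.2 * L)

theorem mem_liftResidues {L k m n : ℕ} {S : List (ℕ × ℕ)} (hL : 0 < L) (hk : 0 < k)
    (h : (m % L, n % L) ∈ S) : (m % (L * k), n % (L * k)) ∈ liftResidues L k S := by
  have digit_lt (t : ℕ) : t % (L * k) / L < k :=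
    Nat.div_lt_of_lt_mul (Nat.mod_lt _ (Nat.mul_pos hL hk))
  have decompose (t : ℕ) : t % L + t % (L * k) / L * L = t % (L * k) := by
    rw [← Nat.mod_mul_right_mod t L k, Nat.mod_add_div']
  simp only [liftResidues, List.mem_flatMap, List.mem_map, Prod.exists, List.mem_product,
    List.mem_range]
  exact ⟨_, _, h, _, _, ⟨digit_lt m, digit_lt n⟩, by rw [decompose, decompose]⟩

def sieveStep (c d L k : ℕ) (ps : List ℕ) (S : List (ℕ × ℕ)) : List (ℕ × ℕ) :=
  (liftResidues L k S).filter fun ab => ps.all fun p => !decide (ExcludedBy c d (L * k) p ab)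

-- Each level `(k, ps)` multiplies the modulus by `k` and then sieves with the primes `ps`.
def sieve (c d : ℕ) : ℕ → List (ℕ × List ℕ) → List (ℕ × ℕ) → List (ℕ × ℕ)
  | _, [], S => S
  | L, (k, ps) :: levels, S => sieve c d (L * k) levels (sieveStep c d L k ps S)

theorem sieve_ne_nil {c d y m n : ℕ} (h : y ^ 2 + c ^ m = d ^ n) :
    ∀ {L : ℕ} {S : List (ℕ × ℕ)} (levels : List (ℕ × List ℕ)), 0 < L →
      (m % L, n % L) ∈ S → (∀ lvl ∈ levels, 0 < lvl.1 ∧ ∀ p ∈ lvl.2, p.Prime ∧ p ≠ 2) →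
      sieve c d L levels S ≠ []
  | _, _, [], _, hS, _ => List.ne_nil_of_mem hS
  | _, _, (_, ps) :: levels, hL, hS, hlevels => by
    obtain ⟨hk, hps⟩ := hlevels _ List.mem_cons_self
    refine sieve_ne_nil h levels (Nat.mul_pos hL hk) ?_
      fun lvl hlvl => hlevels lvl (List.mem_cons_of_mem _ hlvl)
    refine List.mem_filter.2 ⟨mem_liftResidues hL hk hS, List.all_eq_true.2 fun p hp => ?_⟩
    simpa using not_excludedBy h (hps p hp).1 (hps p hp).2

theorem odd_of_sq_add_pow_eq_pow {c d y m n : ℕ} (hc : Odd c) (hd : 4 ∣ d) (hn : n ≠ 0)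
    (h : y ^ 2 + c ^ m = d ^ n) : Odd m := by
  by_contra hm
  obtain ⟨t, rfl⟩ := Nat.not_odd_iff_even.1 hm
  obtain ⟨u, hu⟩ := hc.pow (n := t)
  have no_sq_add_odd_sq : ∀ a b : ZMod 4, a ^ 2 + (2 * b + 1) ^ 2 ≠ 0 := by decide
  apply no_sq_add_odd_sq y u
  have hd0 : (d : ZMod 4) = 0 := (ZMod.natCast_eq_zero_iff d 4).2 hd
  have := congrArg (Nat.cast : ℕ → ZMod 4) h
  rw [← two_mul, pow_mul', hu] at this
  push_cast at this
  rw [this, hd0, zero_pow hn]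

theorem add_one_eq_and_add_eq_pow_of_sq_add_pow_eq_sq {c y D m : ℕ} (hc : c.Prime)
    (hcD : ¬ c ∣ 2 * D) (h : y ^ 2 + c ^ m = D ^ 2) : y + 1 = D ∧ y + D = c ^ m := by
  have hyD : y ≤ D := (Nat.pow_le_pow_iff_left two_ne_zero).1 (h ▸ Nat.le_add_right _ _)
  have hfac : (D + y) * (D - y) = c ^ m := by rw [← Nat.sq_sub_sq]; omega
  obtain ⟨i, -, hi⟩ := (Nat.dvd_prime_pow hc).1 (Dvd.intro_left _ hfac)
  obtain ⟨j, -, hj⟩ := (Nat.dvd_prime_pow hc).1 (Dvd.intro _ hfac)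
  have hi0 : i = 0 := by
    by_contra hi0
    have hij : i ≤ j := (Nat.pow_le_pow_iff_right hc.one_lt).1 (hi ▸ hj ▸ by omega)
    refine hcD ?_
    rw [show 2 * D = (D - y) + (D + y) by omega, hi, hj]
    exact dvd_add (dvd_pow_self c hi0) (dvd_pow_self c (by omega))
  rw [hi0, pow_zero] at hi
  rw [hi, mul_one] at hfac
  omega

theorem pow_add_one_ne_two_mul_pow {c d v m k : ℕ} (hm : Odd m) (hk : 2 ≤ k)
    (hv : v ∣ 2 * d ^ 2) (hcv : c ^ 2 ≡ 1 [MOD v]) (hcv' : ¬ v ∣ c + 1) :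
    c ^ m + 1 ≠ 2 * d ^ k := by
  obtain ⟨t, rfl⟩ := hm
  have hmod : c ^ (2 * t + 1) + 1 ≡ c + 1 [MOD v] := by
    simpa [pow_succ, pow_mul] using ((hcv.pow t).mul_right c).add_right 1
  intro heq
  have hv_dvd : v ∣ 2 * d ^ k := hv.trans (mul_dvd_mul_left 2 (pow_dvd_pow d hk))
  exact hcv' ((hmod.dvd_iff dvd_rfl).1 (heq ▸ hv_dvd))

theorem eq_of_sq_add_pow_eq_pow {c d v : ℕ} (levels : List (ℕ × List ℕ)) (hc : c.Prime)
    (hcd : c + 1 = 2 * d) (hd : 4 ∣ d) (hv : v ∣ 2 * d ^ 2) (hcv : c ^ 2 ≡ 1 [MOD v])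
    (hcv' : ¬ v ∣ c + 1)
    (hlevels : ∀ lvl ∈ levels, 0 < lvl.1 ∧ ∀ p ∈ lvl.2, p.Prime ∧ p ≠ 2)
    (hsieve : sieve c d 2 levels [(1, 1)] = []) {y m n : ℕ} (hn : 0 < n)
    (h : y ^ 2 + c ^ m = d ^ n) : y + 1 = d ∧ m = 1 ∧ n = 2 := by
  have hm : Odd m := odd_of_sq_add_pow_eq_pow ⟨d - 1, by omega⟩ hd hn.ne' h
  obtain ⟨k, rfl⟩ : Even n := by
    refine Nat.not_odd_iff_even.1 fun hn_odd => sieve_ne_nil h levels two_pos ?_ hlevels hsieve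
    simp [Nat.odd_iff.1 hm, Nat.odd_iff.1 hn_odd]
  have hcD : ¬ c ∣ 2 * d ^ k := fun hdvd => by
    have : c ∣ c + 1 := hcd ▸ (hc.dvd_mul.1 hdvd).elim (Dvd.dvd.mul_right · d)
      fun h => (hc.dvd_of_dvd_pow h).mul_left 2
    exact hc.one_lt.ne' (Nat.dvd_one.1 ((Nat.dvd_add_right dvd_rfl).1 this))
  have h' : y ^ 2 + c ^ m = (d ^ k) ^ 2 := by rwa [← pow_mul, mul_two]
  obtain ⟨hy, hyc⟩ := add_one_eq_and_add_eq_pow_of_sq_add_pow_eq_sq hc hcD h'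
  obtain rfl | hk : k = 1 ∨ 2 ≤ k := by omega
  · rw [pow_one] at hy hyc
    exact ⟨hy, (Nat.pow_eq_self_iff hc.one_lt).1 (by omega), rfl⟩
  · exact absurd (by omega) (pow_add_one_ne_two_mul_pow hm hk hv hcv hcv')

theorem sq_add_pow_eq_pow_iff {c d v : ℕ} (levels : List (ℕ × List ℕ)) (hc : c.Prime)
    (hcd : c + 1 = 2 * d) (hd : 4 ∣ d) (hv : v ∣ 2 * d ^ 2) (hcv : c ^ 2 ≡ 1 [MOD v])
    (hcv' : ¬ v ∣ c + 1)
    (hlevels : ∀ lvl ∈ levels, 0 < lvl.1 ∧ ∀ p ∈ lvl.2, p.Prime ∧ p ≠ 2)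
    (hsieve : sieve c d 2 levels [(1, 1)] = []) (x : ℤ) (m n : ℕ) (hn : 0 < n) :
    x ^ 2 + (c : ℤ) ^ m = (d : ℤ) ^ n ↔ (x = d - 1 ∨ x = -(d - 1)) ∧ m = 1 ∧ n = 2 := by
  constructor
  · intro h
    have h' : x.natAbs ^ 2 + c ^ m = d ^ n := by rw [← Int.natAbs_sq] at h; exact_mod_cast h
    obtain ⟨hy, hm, hn⟩ :=
      eq_of_sq_add_pow_eq_pow levels hc hcd hd hv hcv hcv' hlevels hsieve hn h'
    refine ⟨?_, hm, hn⟩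
    have hy' : (x.natAbs : ℤ) = d - 1 := by omega
    rw [← hy']
    exact x.natAbs_eq
  · rintro ⟨hx, rfl, rfl⟩
    have hcd' : (c : ℤ) + 1 = 2 * d := by exact_mod_cast hcd
    rcases hx with rfl | rfl <;> linear_combination hcd'

theorem terai_equations :
    (∀ (x : ℤ) (m n : ℕ), 0 < m → 0 < n →
      (x ^ 2 + 23 ^ m = 12 ^ n ↔ (x = 11 ∨ x = -11) ∧ m = 1 ∧ n = 2)) ∧
    (∀ (x : ℤ) (m n : ℕ), 0 < m → 0 < n →
      (x ^ 2 + 47 ^ m = 24 ^ n ↔ (x = 23 ∨ x = -23) ∧ m = 1 ∧ n = 2)) := by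
  refine ⟨fun x m n _ hn => ?_, fun x m n _ hn => ?_⟩
  · simpa using sq_add_pow_eq_pow_iff (c := 23) (d := 12) (v := 16)
      [(3, [7, 13]), (6, [37, 73]), (4, [17]), (2, [97, 193, 577]), (3, [109, 271, 433, 2593]),
        (5, [31, 41, 61, 541])]
      (by norm_num) rfl (by norm_num) (by norm_num) rfl (by norm_num) (by norm_num)
      (by decide +kernel) x m n hn
  · simpa using sq_add_pow_eq_pow_iff (c := 47) (d := 24) (v := 32)
      [(3, [7]), (2, [5, 13]), (2, [97]), (3, [19, 37, 73]), (5, [31, 61, 241, 271])]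
      (by norm_num) rfl (by norm_num) (by norm_num) rfl (by norm_num) (by norm_num)
      (by decide +kernel) x m n hn
end

section
/- Let n be an odd prime and let x, y be coprime integers, not both zero, and define φₙ(x, y) = Σ_{i=0}^{n−1} (−1)^i x^{n−1−i} y^i, so that (x + y)·φₙ(x, y) = x^n + y^n. Then gcd(x + y, φₙ(x, y)) ∈ {1, n}; moreover the following are equivalent: gcd(x + y, φₙ(x, y)) = n, n ∣ x^n + y^n, n ∣ φₙ(x, y), and n ∣ x + y. Furthermore, n² does not divide φₙ(x, y). -/
/-!
Since `φₙ(x, y) = ∑ (-y)^i x^(n-1-i)` is the geometric sum for `x^n - (-y)^n`, modulo `x + y` it is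
congruent to `n x^(n-1)`; as `x + y` is coprime to `x`, any common divisor of `x + y` and `φₙ`
divides `n`. Fermat's little theorem gives `x^n + y^n ≡ x + y (mod n)`, which links the
divisibility conditions, and when `n ∣ x + y` lifting the exponent gives `v_n(φₙ(x, y)) = 1`.
-/

/-- `phi n x y = ∑_{i=0}^{n-1} (-1)^i x^(n-1-i) y^i`, so that
`(x + y) * phi n x y = x ^ n + y ^ n` for odd `n`. -/
def phi (n : ℕ) (x y : ℤ) : ℤ :=
  ∑ i ∈ Finset.range n, (-1) ^ i * x ^ (n - 1 - i) * y ^ i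

lemma phi_eq_geom_sum₂ (n : ℕ) (x y : ℤ) :
    phi n x y = ∑ i ∈ Finset.range n, (-y) ^ i * x ^ (n - 1 - i) :=
  Finset.sum_congr rfl fun i _ => by rw [neg_pow]; ring

lemma add_mul_phi {n : ℕ} (hodd : Odd n) (x y : ℤ) :
    (x + y) * phi n x y = x ^ n + y ^ n := by
  have h := geom_sum₂_mul (-y) x n
  rw [← phi_eq_geom_sum₂, hodd.neg_pow] at h
  linear_combination -h

lemma dvd_phi_iff_of_dvd_add {n : ℕ} {x y p : ℤ} (h : p ∣ x + y) :
    p ∣ phi n x y ↔ p ∣ n * x ^ (n - 1) := by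
  rw [phi_eq_geom_sum₂]
  exact dvd_geom_sum₂_iff_of_dvd_sub (by rwa [← neg_add', dvd_neg, add_comm])

lemma Int.prime_dvd_pow_add_pow_iff {p : ℕ} (hp : p.Prime) (x y : ℤ) :
    (p : ℤ) ∣ x ^ p + y ^ p ↔ (p : ℤ) ∣ x + y := by
  have h := (Int.ModEq.pow_prime_eq_self hp x).add (Int.ModEq.pow_prime_eq_self hp y)
  rw [← Int.modEq_zero_iff_dvd, ← Int.modEq_zero_iff_dvd]
  exact ⟨h.symm.trans, h.trans⟩

lemma prime_dvd_phi_iff {p : ℕ} (hp : p.Prime) (hodd : Odd p) (x y : ℤ) :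
    (p : ℤ) ∣ phi p x y ↔ (p : ℤ) ∣ x + y := by
  refine ⟨fun h => ?_, fun h => (dvd_phi_iff_of_dvd_add h).2 (dvd_mul_right _ _)⟩
  rw [← Int.prime_dvd_pow_add_pow_iff hp, ← add_mul_phi hodd]
  exact h.mul_left _

lemma gcd_add_phi_dvd (n : ℕ) {x y : ℤ} (hxy : IsCoprime x y) :
    Int.gcd (x + y) (phi n x y) ∣ n := by
  set g := Int.gcd (x + y) (phi n x y)
  have hg : (g : ℤ) ∣ x + y := Int.gcd_dvd_left _ _
  have hsum : IsCoprime (x + y) x := by simpa [add_comm] using hxy.symm.add_mul_left_left 1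
  have hgx : IsCoprime (g : ℤ) x := hsum.of_isCoprime_of_dvd_left hg
  have hgn : (g : ℤ) ∣ n * x ^ (n - 1) := (dvd_phi_iff_of_dvd_add hg).1 (Int.gcd_dvd_right _ _)
  exact_mod_cast hgx.pow_right.dvd_of_dvd_mul_right hgn

lemma not_prime_sq_dvd_phi {p : ℕ} (hp : p.Prime) (hodd : Odd p) {x y : ℤ}
    (hxy : IsCoprime x y) :
    ¬ (p : ℤ) ^ 2 ∣ phi p x y := by
  have hpZ : Prime (p : ℤ) := Nat.prime_iff_prime_int.1 hp
  by_cases hdvd : (p : ℤ) ∣ x + y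
  · have hy : ¬ (p : ℤ) ∣ y := fun hy =>
      hpZ.not_isUnit (hxy.isUnit_of_dvd' ((dvd_add_left hy).1 hdvd) hy)
    -- lifting the exponent: `p ∣ (-y) - x` with `p ∤ -y` forces `v_p(φ_p) = 1`
    have h := emultiplicity_geom_sum₂_eq_one hpZ hodd
      (by rwa [← neg_add', dvd_neg, add_comm]) (by rwa [dvd_neg] : ¬ (p : ℤ) ∣ -y)
    rw [← phi_eq_geom_sum₂] at h
    exact not_pow_dvd_of_emultiplicity_lt (by rw [h]; norm_cast)
  · exact fun h => hdvd ((prime_dvd_phi_iff hp hodd x y).1 ((dvd_pow_self _ two_ne_zero).trans h))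

theorem gcd_of_phi_general (n : ℕ) (hn : n.Prime) (hodd : Odd n)
    (x y : ℤ) (hxy : Int.gcd x y = 1) :
    (x + y) * phi n x y = x ^ n + y ^ n ∧
    (Int.gcd (x + y) (phi n x y) = 1 ∨ Int.gcd (x + y) (phi n x y) = n) ∧
    (Int.gcd (x + y) (phi n x y) = n ↔ (n : ℤ) ∣ x ^ n + y ^ n) ∧
    ((n : ℤ) ∣ x ^ n + y ^ n ↔ (n : ℤ) ∣ phi n x y) ∧
    ((n : ℤ) ∣ phi n x y ↔ (n : ℤ) ∣ x + y) ∧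
    ¬ ((n : ℤ) ^ 2 ∣ phi n x y) := by
  have hcop : IsCoprime x y := Int.isCoprime_iff_gcd_eq_one.2 hxy
  have hgcd_dvd := gcd_add_phi_dvd n hcop
  have hpow := Int.prime_dvd_pow_add_pow_iff hn x y
  have hphi := prime_dvd_phi_iff hn hodd x y
  have hgcd : Int.gcd (x + y) (phi n x y) = n ↔ (n : ℤ) ∣ x + y := by
    refine ⟨fun h => ?_, fun h => Nat.dvd_antisymm hgcd_dvd ?_⟩
    · rw [← h]
      exact Int.gcd_dvd_left _ _
    · exact Int.natCast_dvd_natCast.1 (Int.dvd_coe_gcd h (hphi.2 h))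
  exact ⟨add_mul_phi hodd x y, hn.eq_one_or_self_of_dvd _ hgcd_dvd, hgcd.trans hpow.symm,
    hpow.trans hphi.symm, hphi, not_prime_sq_dvd_phi hn hodd hcop⟩

theorem gcd_of_phi (n : ℕ) (hn : n.Prime) (hodd : Odd n)
    (x y : ℤ) (hne : ¬(x = 0 ∧ y = 0)) (hxy : Int.gcd x y = 1) :
    (x + y) * phi n x y = x ^ n + y ^ n ∧
    (Int.gcd (x + y) (phi n x y) = 1 ∨ Int.gcd (x + y) (phi n x y) = n) ∧
    (Int.gcd (x + y) (phi n x y) = n ↔ (n : ℤ) ∣ x ^ n + y ^ n) ∧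
    ((n : ℤ) ∣ x ^ n + y ^ n ↔ (n : ℤ) ∣ phi n x y) ∧
    ((n : ℤ) ∣ phi n x y ↔ (n : ℤ) ∣ x + y) ∧
    ¬ ((n : ℤ) ^ 2 ∣ phi n x y) :=
  gcd_of_phi_general n hn hodd x y hxy
end

section
/- Let n be an odd prime, let x, y be coprime integers, and let ℓ be a prime dividing x^n + y^n. Then either ℓ divides x + y, or ℓ ≡ 1 (mod n). -/
/-!
Reduce modulo `ℓ`. Coprimality keeps `y` away from `0` there, and oddness of `n` turns
`x ^ n + y ^ n ≡ 0` into `x ^ n = (-y) ^ n` in `ZMod ℓ`. Unless `x ≡ -y`, the quotient `x / (-y)` is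
an `n`-th root of unity different from `1`, so it has order exactly `n`, and `n` divides
`ℓ - 1 = #(ZMod ℓ)ˣ`.
-/

lemma Nat.Prime.dvd_card_sub_one_of_pow_eq_pow {K : Type*} [Field K] [Fintype K] {n : ℕ}
    (hn : n.Prime) {a b : K} (hb : b ≠ 0) (hab : a ≠ b) (h : a ^ n = b ^ n) :
    n ∣ Fintype.card K - 1 := by
  have := Fact.mk hn
  have hu : (a / b) ^ n = 1 := by rw [div_pow, h, div_self (pow_ne_zero n hb)]
  have hu1 : a / b ≠ 1 := fun h1 => hab ((div_eq_one_iff_eq hb).mp h1)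
  have hu0 : a / b ≠ 0 := fun h0 => hu1 (by simpa [h0, hn.ne_zero] using hu.symm)
  rw [← orderOf_eq_prime hu hu1]
  exact orderOf_dvd_of_pow_eq_one (FiniteField.pow_card_sub_one_eq_one _ hu0)

lemma Prime.not_dvd_left_of_dvd_add_pow {R : Type*} [CommRing R] {p x y : R} (hp : Prime p)
    (hxy : IsCoprime x y) {n : ℕ} (hn : n ≠ 0) (hdvd : p ∣ x ^ n + y ^ n) : ¬p ∣ x := by
  intro hx
  have hyn : p ∣ y ^ n := (dvd_add_right (dvd_pow hx hn)).mp hdvd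
  exact hp.not_isUnit (hxy.isUnit_of_dvd' hx (hp.dvd_of_dvd_pow hyn))

theorem prime_divisor_of_sum_of_nth_powers (n : ℕ) (hn : n.Prime) (hodd : Odd n)
    (x y : ℤ) (hxy : Int.gcd x y = 1)
    (ℓ : ℕ) (hℓ : ℓ.Prime) (hdvd : (ℓ : ℤ) ∣ x ^ n + y ^ n) :
    (ℓ : ℤ) ∣ x + y ∨ ℓ ≡ 1 [MOD n] := by
  have := Fact.mk hℓ
  refine or_iff_not_imp_left.mpr fun hsum => ?_
  have hy : ¬(ℓ : ℤ) ∣ y := Prime.not_dvd_left_of_dvd_add_pow (Nat.prime_iff_prime_int.mp hℓ)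
    (Int.isCoprime_iff_gcd_eq_one.mpr hxy).symm hn.ne_zero (by rwa [add_comm])
  have hb : -(y : ZMod ℓ) ≠ 0 := by
    rwa [neg_ne_zero, Ne, ZMod.intCast_zmod_eq_zero_iff_dvd]
  have hab : (x : ZMod ℓ) ≠ -y := by
    rwa [Ne, eq_neg_iff_add_eq_zero, ← Int.cast_add, ZMod.intCast_zmod_eq_zero_iff_dvd]
  have hpow : (x : ZMod ℓ) ^ n = (-y) ^ n := by
    rw [hodd.neg_pow, eq_neg_iff_add_eq_zero]
    exact_mod_cast (ZMod.intCast_zmod_eq_zero_iff_dvd _ _).mpr hdvd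
  have hn_dvd : n ∣ ℓ - 1 := ZMod.card ℓ ▸ hn.dvd_card_sub_one_of_pow_eq_pow hb hab hpow
  exact ((Nat.modEq_iff_dvd' hℓ.one_lt.le).mpr hn_dvd).symm
end

section
/- Let x and y be coprime nonzero integers and let n ≥ 5 be a prime number. If it is not the case that |x| = |y| = 1, then x^n + y^n has a prime divisor ℓ ≥ 11 (that is, the largest prime factor of x^n + y^n is at least 11). -/
/-!
Suppose every prime factor `p` of `S = x ^ n + y ^ n` is below `11`. Then `p - 1 ∈ {1, 2, 4, 6}`
is prime to `n`, so `t ↦ t ^ n` is injective on `ZMod p` and `p ∣ x + y`. Write `S = Q (x + y)`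
with `Q = ∑ xⁱ (-y)ⁿ⁻¹⁻ⁱ`. Modulo a prime `p ∣ x + y` we have `Q ≡ n yⁿ⁻¹`, so by coprimality
every prime factor of `Q` is `n`; and if `n ∣ x + y` this congruence even holds modulo `n²`, so
`n² ∤ Q`. Hence `Q ∣ n` and `|S| ≤ n |x + y|`, which is impossible for `n ≥ 5` once `|x| ≠ |y|`.
-/

open Finset

theorem pow_left_injective_of_coprime_card_units {M : Type*} [GroupWithZero M] {n : ℕ}
    (hn : n ≠ 0) (h : (Nat.card Mˣ).Coprime n) : Function.Injective (· ^ n : M → M) := by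
  intro a b hab
  dsimp only at hab
  rcases eq_or_ne a 0 with rfl | ha
  · exact (pow_eq_zero_iff hn |>.mp (hab.symm.trans (zero_pow hn))).symm
  rcases eq_or_ne b 0 with rfl | hb
  · exact pow_eq_zero_iff hn |>.mp (hab.trans (zero_pow hn))
  have : Units.mk0 a ha ^ n = Units.mk0 b hb ^ n := Units.ext (by simpa using hab)
  simpa using congrArg Units.val (h.pow_left_bijective.injective this)

theorem IsCoprime.not_dvd_right_of_dvd_add {R : Type*} [CommRing R] {x y p : R}
    (h : IsCoprime x y) (hp : ¬IsUnit p) (hxy : p ∣ x + y) : ¬p ∣ y :=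
  fun hy => hp (h.isUnit_of_dvd' ((dvd_add_left hy).mp hxy) hy)

theorem Odd.geom_sum₂_neg_mul_add {R : Type*} [CommRing R] (x y : R) {n : ℕ} (hn : Odd n) :
    (∑ i ∈ range n, x ^ i * (-y) ^ (n - 1 - i)) * (x + y) = x ^ n + y ^ n := by
  rw [← sub_neg_eq_add x y, geom_sum₂_mul, hn.neg_pow, sub_neg_eq_add]

theorem Nat.coprime_prime_sub_one_of_lt_eleven {p n : ℕ} (hp : p.Prime) (hp11 : p < 11)
    (hn : n.Prime) (h5 : 5 ≤ n) : (p - 1).Coprime n := by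
  refine (hn.coprime_iff_not_dvd.mpr fun hdvd => ?_).symm
  have hle : n ≤ p - 1 := Nat.le_of_dvd (by have := hp.two_le; omega) hdvd
  interval_cases p <;> interval_cases n <;> norm_num at *

theorem Nat.dvd_of_forall_prime_dvd_eq_of_not_sq_dvd {m q : ℕ} (hm : m ≠ 0)
    (h : ∀ p, p.Prime → p ∣ m → p = q) (hsq : ¬q ^ 2 ∣ m) : m ∣ q := by
  obtain ⟨k, rfl⟩ : ∃ k, m = q ^ k :=
    ⟨_, Nat.eq_prime_pow_of_unique_prime_dvd hm fun hp hpm => h _ hp hpm⟩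
  have hk : k ≤ 1 := by
    by_contra! hk
    exact hsq (pow_dvd_pow q hk)
  simpa using pow_dvd_pow q hk

namespace Int

theorem prime_dvd_add_of_dvd_pow_add_pow {x y : ℤ} {n p : ℕ} (hp : p.Prime) (hn : Odd n)
    (hcop : (p - 1).Coprime n) (hdvd : (p : ℤ) ∣ x ^ n + y ^ n) : (p : ℤ) ∣ x + y := by
  have := Fact.mk hp
  have hcard : (Nat.card (ZMod p)ˣ).Coprime n := by
    rwa [Nat.card_eq_fintype_card, ZMod.card_units]
  have hpow : (x : ZMod p) ^ n = (-y : ZMod p) ^ n := by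
    rw [hn.neg_pow, eq_neg_iff_add_eq_zero]
    exact_mod_cast (ZMod.intCast_zmod_eq_zero_iff_dvd _ p).mpr hdvd
  have hxy := pow_left_injective_of_coprime_card_units hn.pos.ne' hcard hpow
  rw [← ZMod.intCast_zmod_eq_zero_iff_dvd]
  push_cast
  rw [hxy, neg_add_cancel]

theorem dvd_of_prime_dvd_geom_sum₂_neg {x y : ℤ} (hxy : IsCoprime x y) {n p : ℕ}
    (hp : p.Prime) (hpxy : (p : ℤ) ∣ x + y)
    (hpQ : (p : ℤ) ∣ ∑ i ∈ Finset.range n, x ^ i * (-y) ^ (n - 1 - i)) : p ∣ n := by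
  have hp' := Nat.prime_iff_prime_int.mp hp
  rw [dvd_geom_sum₂_iff_of_dvd_sub (by rwa [sub_neg_eq_add])] at hpQ
  rcases hp'.dvd_or_dvd hpQ with hpn | hpy
  · exact_mod_cast hpn
  · exact absurd (dvd_neg.mp (hp'.dvd_of_dvd_pow hpy))
      (hxy.not_dvd_right_of_dvd_add hp'.not_isUnit hpxy)

theorem not_sq_dvd_geom_sum₂_neg {x y : ℤ} (hxy : IsCoprime x y) {p : ℕ} (hp : p.Prime)
    (hodd : Odd p) (hpxy : (p : ℤ) ∣ x + y) :
    ¬(p : ℤ) ^ 2 ∣ ∑ i ∈ Finset.range p, x ^ i * (-y) ^ (p - 1 - i) := by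
  intro hsq
  have hp' := Nat.prime_iff_prime_int.mp hp
  obtain ⟨b, hb⟩ := hpxy
  have hx : x = -y + p * b := by linear_combination hb
  have hmod := odd_sq_dvd_geom_sum₂_sub (-y) b hodd
  rw [← hx] at hmod
  have hpy : (p : ℤ) ∣ (-y) ^ (p - 1) := by
    have := (dvd_sub_right hsq).mp hmod
    rwa [sq, mul_dvd_mul_iff_left (by exact_mod_cast hp.ne_zero)] at this
  exact hxy.not_dvd_right_of_dvd_add hp'.not_isUnit ⟨b, hb⟩
    (dvd_neg.mp (hp'.dvd_of_dvd_pow hpy))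

theorem pow_add_pow_dvd_mul_add_of_forall_prime_dvd {x y : ℤ} (hxy : IsCoprime x y) {n : ℕ}
    (hn : n.Prime) (hodd : Odd n) (hS : x ^ n + y ^ n ≠ 0)
    (h : ∀ p : ℕ, p.Prime → (p : ℤ) ∣ x ^ n + y ^ n → (p : ℤ) ∣ x + y) :
    x ^ n + y ^ n ∣ n * (x + y) := by
  set Q := ∑ i ∈ Finset.range n, x ^ i * (-y) ^ (n - 1 - i)
  have hQ : Q * (x + y) = x ^ n + y ^ n := hodd.geom_sum₂_neg_mul_add x y
  have hQS : Q ∣ x ^ n + y ^ n := Dvd.intro _ hQ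
  have hQ0 : Q.natAbs ≠ 0 := by
    rw [Int.natAbs_ne_zero]
    intro hQzero
    exact hS (by rw [← hQ, hQzero, zero_mul])
  have hQprime : ∀ p, p.Prime → p ∣ Q.natAbs → p = n := fun p hp hpQ => by
    have hpQ' : (p : ℤ) ∣ Q := Int.natCast_dvd.mpr hpQ
    exact (Nat.prime_dvd_prime_iff_eq hp hn).mp
      (dvd_of_prime_dvd_geom_sum₂_neg hxy hp (h p hp (hpQ'.trans hQS)) hpQ')
  have hQsq : ¬n ^ 2 ∣ Q.natAbs := fun hsq => by
    have hsq' : (n : ℤ) ^ 2 ∣ Q := by exact_mod_cast Int.natCast_dvd.mpr hsq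
    have hnQ : (n : ℤ) ∣ Q := (dvd_pow_self _ two_ne_zero).trans hsq'
    exact not_sq_dvd_geom_sum₂_neg hxy hn hodd (h n hn (hnQ.trans hQS)) hsq'
  have hQn : Q ∣ n := Int.natAbs_dvd.mp
    (Int.natCast_dvd_natCast.mpr (Nat.dvd_of_forall_prime_dvd_eq_of_not_sq_dvd hQ0 hQprime hQsq))
  rw [← hQ]
  exact mul_dvd_mul_right hQn _

theorem pow_le_pow_succ_sub_pow_succ {a b : ℤ} (hb : 0 ≤ b) (hba : b < a) (n : ℕ) :
    a ^ n ≤ a ^ (n + 1) - b ^ (n + 1) := by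
  have hbn : b ^ n ≤ a ^ n := pow_le_pow_left₀ hb hba.le n
  have : b * b ^ n ≤ (a - 1) * a ^ n :=
    mul_le_mul (by omega) hbn (pow_nonneg hb n) (by omega)
  rw [pow_succ', pow_succ']
  linarith

theorem succ_mul_two_mul_sub_one_lt_pow {a : ℤ} (ha : 2 ≤ a) {m : ℕ} (hm : 4 ≤ m) :
    (m + 1) * (2 * a - 1) < a ^ m := by
  induction m, hm using Nat.le_induction with
  | base =>
    have ha2 : 4 ≤ a ^ 2 := by nlinarith
    norm_num
    nlinarith [mul_le_mul_of_nonneg_right ha2 (sq_nonneg a)]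
  | succ m hm ih =>
    have hpos : 0 ≤ (m : ℤ) * (2 * a - 1) := mul_nonneg (by positivity) (by omega)
    push_cast at ih ⊢
    rw [pow_succ]
    nlinarith [mul_le_mul_of_nonneg_left ha (pow_nonneg (by omega : (0 : ℤ) ≤ a) m)]

theorem mul_abs_add_lt_abs_pow_add_pow {x y : ℤ} (hx : x ≠ 0) (hy : y ≠ 0) (habs : |x| ≠ |y|)
    {n : ℕ} (hn : 5 ≤ n) : n * |x + y| < |x ^ n + y ^ n| := by
  wlog hlt : |y| < |x| generalizing x y
  · rw [add_comm x, add_comm (x ^ n)]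
    exact this hy hx habs.symm (lt_of_le_of_ne (not_lt.mp hlt) habs)
  obtain ⟨m, rfl⟩ : ∃ m, n = m + 1 := ⟨n - 1, by omega⟩
  have hy0 : 0 < |y| := abs_pos.mpr hy
  calc ((m + 1 : ℕ) : ℤ) * |x + y|
    _ ≤ (m + 1) * (2 * |x| - 1) := by
        push_cast
        gcongr
        linarith [abs_add_le x y]
    _ < |x| ^ m := succ_mul_two_mul_sub_one_lt_pow (by omega) (by omega)
    _ ≤ |x| ^ (m + 1) - |y| ^ (m + 1) := pow_le_pow_succ_sub_pow_succ hy0.le hlt m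
    _ ≤ |x ^ (m + 1) + y ^ (m + 1)| := by
        simpa [abs_pow] using abs_sub_abs_le_abs_add (x ^ (m + 1)) (y ^ (m + 1))

end Int

theorem large_prime_factor_of_sum_of_nth_powers
    (x y : ℤ) (hx : x ≠ 0) (hy : y ≠ 0) (hxy : Int.gcd x y = 1)
    (n : ℕ) (hn : n.Prime) (h5 : 5 ≤ n)
    (h : ¬(|x| = 1 ∧ |y| = 1)) :
    ∃ ℓ : ℕ, ℓ.Prime ∧ 11 ≤ ℓ ∧ (ℓ : ℤ) ∣ x ^ n + y ^ n := by
  by_contra! hsmall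
  have hodd : Odd n := hn.odd_of_ne_two (by omega)
  have habs : |x| ≠ |y| := fun he => by
    rw [Int.gcd_eq_natAbs, ← Int.natAbs_abs y, ← he, Int.natAbs_abs, Nat.gcd_self] at hxy
    have hx1 : |x| = 1 := by rw [Int.abs_eq_natAbs, hxy, Nat.cast_one]
    exact h ⟨hx1, he ▸ hx1⟩
  have hsum : x + y ≠ 0 := fun h0 => habs (by rw [eq_neg_of_add_eq_zero_left h0, abs_neg])
  have hsize := Int.mul_abs_add_lt_abs_pow_add_pow hx hy habs h5
  have hS : x ^ n + y ^ n ≠ 0 := abs_pos.mp (lt_of_le_of_lt (by positivity) hsize)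
  have hdvd : x ^ n + y ^ n ∣ n * (x + y) :=
    Int.pow_add_pow_dvd_mul_add_of_forall_prime_dvd (Int.isCoprime_iff_gcd_eq_one.mpr hxy)
      hn hodd hS fun p hp hpS => Int.prime_dvd_add_of_dvd_pow_add_pow hp hodd
        (Nat.coprime_prime_sub_one_of_lt_eleven hp (not_le.mp fun h11 => hsmall p hp h11 hpS)
          hn h5) hpS
  have hle : |x ^ n + y ^ n| ≤ n * |x + y| := by
    have hne : (n : ℤ) * (x + y) ≠ 0 := mul_ne_zero (by exact_mod_cast hn.ne_zero) hsum
    simpa [abs_mul] using Int.le_of_dvd (abs_pos.mpr hne) ((abs_dvd_abs _ _).mpr hdvd)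
  exact absurd hsize (not_lt.mpr hle)
end
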